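/- arXiv:1009.2748 — 6 statements merged into one kernel-verified Lean document; each statement's English description precedes it below -/
import Mathlib

section
/- Let f : {1,…,N} → ℝ₊ and define, for each i, the quantity B(i,j,k,l) = f_k f_l (1+f_i)(1+f_j) − f_i f_j (1+f_k)(1+f_l). If f_m = 1/(exp(α ε_m + β) − 1) with ε_m = c·m + d for constants α > 0, β, c, d ∈ ℝ (so that exp(α ε_m + β) > 1 for all m), then B(i,j,k,l) = 0 whenever i + j = k + l. -/
/-!
With `E m = exp (α ε_m + β)` the Bose–Einstein value `f m = 1 / (E m - 1)` satisfies
`1 + f m = E m * f m`, so the gain and loss terms of the balance both equal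
`f i f j f k f l` times `E i E j`, resp. `E k E l`. These agree on `i + j = k + l`
because `ε` is affine in `m`, so that `E` is geometric.
-/

/-- The bosonic gain-loss balance `B(i,j,k,l)` of the collision operator. -/
def collisionBalance {R : Type*} [CommRing R] (f : ℕ → R) (i j k l : ℕ) : R :=
  f k * f l * (1 + f i) * (1 + f j) - f i * f j * (1 + f k) * (1 + f l)

lemma one_add_one_div_sub_one {K : Type*} [Field K] {x : K} (hx : x ≠ 1) :
    1 + 1 / (x - 1) = x * (1 / (x - 1)) := by
  have : x - 1 ≠ 0 := sub_ne_zero.mpr hx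
  field_simp
  ring

lemma collisionBalance_eq_zero_of_one_add_eq_mul {R : Type*} [CommRing R] {f E : ℕ → R}
    (hfE : ∀ m, 1 + f m = E m * f m) {i j k l : ℕ} (hE : E i * E j = E k * E l) :
    collisionBalance f i j k l = 0 := by
  rw [collisionBalance, hfE i, hfE j, hfE k, hfE l]
  linear_combination f i * f j * f k * f l * hE

lemma exp_affine_mul_exp_affine_of_add_eq (α β c d : ℝ) {i j k l : ℕ} (h : i + j = k + l) :
    Real.exp (α * (c * i + d) + β) * Real.exp (α * (c * j + d) + β) =
      Real.exp (α * (c * k + d) + β) * Real.exp (α * (c * l + d) + β) := by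
  have hcast : (i + j : ℝ) = k + l := by exact_mod_cast h
  rw [← Real.exp_add, ← Real.exp_add]
  congr 1
  linear_combination α * c * hcast

theorem discrete_BE_balance_general (α β c d : ℝ) (f : ℕ → ℝ)
    (hf : ∀ m, f m = 1 / (Real.exp (α * (c * m + d) + β) - 1))
    (hexp : ∀ m : ℕ, 1 < Real.exp (α * (c * m + d) + β))
    (i j k l : ℕ) (h : i + j = k + l) :
    f k * f l * (1 + f i) * (1 + f j) - f i * f j * (1 + f k) * (1 + f l) = 0 := by
  have hfE : ∀ m, 1 + f m = Real.exp (α * (c * m + d) + β) * f m := fun m => by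
    rw [hf m]
    exact one_add_one_div_sub_one (hexp m).ne'
  exact collisionBalance_eq_zero_of_one_add_eq_mul hfE
    (exp_affine_mul_exp_affine_of_add_eq α β c d h)

/-- Discrete Bose-Einstein distributions `f_m = 1/(exp(α(c m + d) + β) − 1)` on an
equally spaced grid annihilate the bosonic collision balance
`B(i,j,k,l) = f_k f_l (1+f_i)(1+f_j) − f_i f_j (1+f_k)(1+f_l)` whenever `i+j = k+l`. -/
theorem discrete_BE_balance (α β c d : ℝ) (hα : 0 < α) (f : ℕ → ℝ)
    (hf : ∀ m, f m = 1 / (Real.exp (α * (c * m + d) + β) - 1))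
    (hexp : ∀ m : ℕ, 1 < Real.exp (α * (c * m + d) + β))
    (i j k l : ℕ) (h : i + j = k + l) :
    f k * f l * (1 + f i) * (1 + f j) - f i * f j * (1 + f k) * (1 + f l) = 0 :=
  discrete_BE_balance_general α β c d f hf hexp i j k l h
end

section
/- With the notation of the discrete weak form, taking φ ≡ 1 gives w Σ_{i=1}^N Q_i = 0 (discrete mass conservation), and taking φ_i = ε_i with ε_i equally spaced (ε_i = c·i + d) gives w Σ_{i=1}^N Q_i ε_i = 0 (discrete energy conservation). -/
/-!
Weak form: by the symmetries of the collision kernel under `(i,j,k,l) ↦ (j,i,l,k)` and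
`(i,j,k,l) ↦ (k,l,i,j)` (the latter flipping its sign), `4 Σ T_{ijkl} φ_i` equals
`Σ T_{ijkl} (φ_i + φ_j - φ_k - φ_l)`, which vanishes when `φ` is conserved by every
collision `i + j = k + l`. Constants and affine functions of the index are such invariants.
-/

open Finset

section WeakForm

variable {α R : Type*} [CommRing R] (s : Finset α)

theorem sum_sum_sum_sum_swap_pairs (g : α → α → α → α → R) :
    ∑ i ∈ s, ∑ j ∈ s, ∑ k ∈ s, ∑ l ∈ s, g j i l k =
      ∑ i ∈ s, ∑ j ∈ s, ∑ k ∈ s, ∑ l ∈ s, g i j k l := by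
  rw [sum_comm]
  exact sum_congr rfl fun i _ => sum_congr rfl fun j _ => sum_comm

theorem sum_sum_sum_sum_swap_in_out (g : α → α → α → α → R) :
    ∑ i ∈ s, ∑ j ∈ s, ∑ k ∈ s, ∑ l ∈ s, g k l i j =
      ∑ i ∈ s, ∑ j ∈ s, ∑ k ∈ s, ∑ l ∈ s, g i j k l := by
  calc ∑ i ∈ s, ∑ j ∈ s, ∑ k ∈ s, ∑ l ∈ s, g k l i j
      = ∑ p ∈ s ×ˢ s, ∑ q ∈ s ×ˢ s, g q.1 q.2 p.1 p.2 := by simp only [sum_product]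
    _ = ∑ q ∈ s ×ˢ s, ∑ p ∈ s ×ˢ s, g q.1 q.2 p.1 p.2 := sum_comm
    _ = ∑ i ∈ s, ∑ j ∈ s, ∑ k ∈ s, ∑ l ∈ s, g i j k l := by simp only [sum_product]

theorem four_mul_sum_collision_mul (T : α → α → α → α → R) (φ : α → R)
    (hpairs : ∀ i j k l, T j i l k = T i j k l)
    (hinout : ∀ i j k l, T k l i j = -T i j k l) :
    4 * ∑ i ∈ s, ∑ j ∈ s, ∑ k ∈ s, ∑ l ∈ s, T i j k l * φ i =
      ∑ i ∈ s, ∑ j ∈ s, ∑ k ∈ s, ∑ l ∈ s, T i j k l * (φ i + φ j - φ k - φ l) := by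
  have hj : ∑ i ∈ s, ∑ j ∈ s, ∑ k ∈ s, ∑ l ∈ s, T i j k l * φ j =
      ∑ i ∈ s, ∑ j ∈ s, ∑ k ∈ s, ∑ l ∈ s, T i j k l * φ i := by
    rw [← sum_sum_sum_sum_swap_pairs s (fun i j k l => T i j k l * φ j)]
    simp only [hpairs]
  have hl : ∑ i ∈ s, ∑ j ∈ s, ∑ k ∈ s, ∑ l ∈ s, T i j k l * φ l =
      ∑ i ∈ s, ∑ j ∈ s, ∑ k ∈ s, ∑ l ∈ s, T i j k l * φ k := by
    rw [← sum_sum_sum_sum_swap_pairs s (fun i j k l => T i j k l * φ l)]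
    simp only [hpairs]
  have hk : ∑ i ∈ s, ∑ j ∈ s, ∑ k ∈ s, ∑ l ∈ s, T i j k l * φ k =
      -∑ i ∈ s, ∑ j ∈ s, ∑ k ∈ s, ∑ l ∈ s, T i j k l * φ i := by
    rw [← sum_sum_sum_sum_swap_in_out s (fun i j k l => T i j k l * φ k),
      eq_neg_iff_add_eq_zero]
    simp only [← sum_add_distrib]
    refine sum_eq_zero fun i _ => sum_eq_zero fun j _ => sum_eq_zero fun k _ =>
      sum_eq_zero fun l _ => ?_
    rw [hinout]
    ring
  simp only [mul_add, mul_sub, sum_add_distrib, sum_sub_distrib, hj, hl, hk]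
  ring

theorem sum_collision_mul_eq_zero [NoZeroDivisors R] [CharZero R]
    (T : α → α → α → α → R) (φ : α → R)
    (hpairs : ∀ i j k l, T j i l k = T i j k l)
    (hinout : ∀ i j k l, T k l i j = -T i j k l)
    (hφ : ∀ i j k l, T i j k l ≠ 0 → φ i + φ j = φ k + φ l) :
    ∑ i ∈ s, ∑ j ∈ s, ∑ k ∈ s, ∑ l ∈ s, T i j k l * φ i = 0 := by
  have hweak := four_mul_sum_collision_mul s T φ hpairs hinout
  have hterm : ∀ i j k l, T i j k l * (φ i + φ j - φ k - φ l) = 0 := fun i j k l => by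
    by_cases hT : T i j k l = 0
    · rw [hT, zero_mul]
    · rw [hφ i j k l hT]
      ring
  simp only [hterm, sum_const_zero] at hweak
  exact (mul_eq_zero.mp hweak).resolve_left (by norm_num)

end WeakForm

section Kernel

variable {α R : Type*} [AddCommMagma α] [LinearOrder α] [DecidableEq α] [Ring R]

def collisionKernel (ρ : α → R) (B : α → α → α → α → R) (i j k l : α) : R :=
  if i + j = k + l then ρ (min (min i j) (min k l)) * B i j k l else 0

variable (ρ : α → R) {B : α → α → α → α → R}

theorem collisionKernel_swap_pairs (hB : ∀ i j k l, B j i l k = B i j k l) (i j k l : α) :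
    collisionKernel ρ B j i l k = collisionKernel ρ B i j k l := by
  rw [collisionKernel, collisionKernel, add_comm j i, add_comm l k, min_comm j i, min_comm l k,
    hB]

theorem collisionKernel_swap_in_out (hB : ∀ i j k l, B k l i j = -B i j k l) (i j k l : α) :
    collisionKernel ρ B k l i j = -collisionKernel ρ B i j k l := by
  unfold collisionKernel
  rw [min_comm (min k l), hB]
  by_cases h : i + j = k + l
  · rw [if_pos h.symm, if_pos h, mul_neg]
  · rw [if_neg (Ne.symm h), if_neg h, neg_zero]

theorem add_eq_add_of_collisionKernel_ne_zero {φ : α → R}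
    (hφ : ∀ i j k l, i + j = k + l → φ i + φ j = φ k + φ l)
    {i j k l : α} (h : collisionKernel ρ B i j k l ≠ 0) : φ i + φ j = φ k + φ l := by
  unfold collisionKernel at h
  split_ifs at h with hijkl
  · exact hφ i j k l hijkl
  · exact absurd rfl h

end Kernel

theorem affine_add_eq_of_add_eq {R : Type*} [CommRing R] (c d : R) {i j k l : ℕ}
    (h : i + j = k + l) : (c * i + d) + (c * j + d) = (c * k + d) + (c * l + d) := by
  have h' : (i : R) + j = k + l := by simpa using congrArg (Nat.cast : ℕ → R) h
  linear_combination c * h'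

theorem discrete_mass_energy_conservation_general (N : ℕ) (w c d : ℝ)
    (f ρ : ℕ → ℝ)
    (B : ℕ → ℕ → ℕ → ℕ → ℝ)
    (hB : ∀ i j k l, B i j k l =
      f k * f l * (1 + f i) * (1 + f j) - f i * f j * (1 + f k) * (1 + f l))
    (Q : ℕ → ℝ)
    (hQ : ∀ i, Q i = w ^ 2 * ∑ j ∈ Icc 1 N, ∑ l ∈ Icc 1 N, ∑ k ∈ Icc 1 N,
      if i + j = k + l then ρ (min (min i j) (min k l)) * B i j k l else 0) :
    w * ∑ i ∈ Icc 1 N, Q i = 0 ∧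
      w * ∑ i ∈ Icc 1 N, Q i * (c * i + d) = 0 := by
  have hB_pairs : ∀ i j k l, B j i l k = B i j k l := fun i j k l => by
    rw [hB, hB]; ring
  have hB_in_out : ∀ i j k l, B k l i j = -B i j k l := fun i j k l => by
    rw [hB, hB]; ring
  have hconserved : ∀ φ : ℕ → ℝ, (∀ i j k l, i + j = k + l → φ i + φ j = φ k + φ l) →
      ∑ i ∈ Icc 1 N, Q i * φ i = 0 := fun φ hφ => by
    calc ∑ i ∈ Icc 1 N, Q i * φ i
        = w ^ 2 * ∑ i ∈ Icc 1 N, ∑ j ∈ Icc 1 N, ∑ k ∈ Icc 1 N, ∑ l ∈ Icc 1 N,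
            collisionKernel ρ B i j k l * φ i := by
          simp only [hQ, mul_sum, sum_mul, mul_assoc]
          exact sum_congr rfl fun i _ => sum_congr rfl fun j _ => sum_comm
      _ = 0 := by
          rw [sum_collision_mul_eq_zero _ _ φ (collisionKernel_swap_pairs ρ hB_pairs)
            (collisionKernel_swap_in_out ρ hB_in_out)
            fun i j k l => add_eq_add_of_collisionKernel_ne_zero ρ hφ, mul_zero]
  refine ⟨?_, ?_⟩
  · have hmass := hconserved (fun _ => 1) fun _ _ _ _ _ => rfl
    simp only [mul_one] at hmass
    rw [hmass, mul_zero]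
  · rw [hconserved _ fun _ _ _ _ => affine_add_eq_of_add_eq c d, mul_zero]

/-- Discrete mass and energy conservation: for the discretized boson collision
operator `Q` on an equally spaced grid `ε_i = c·i + d`, one has
`w Σᵢ Qᵢ = 0` and `w Σᵢ Qᵢ ε_i = 0`. -/
theorem discrete_mass_energy_conservation (N : ℕ) (w c d : ℝ) (hw : 0 < w)
    (f ρ : ℕ → ℝ)
    (B : ℕ → ℕ → ℕ → ℕ → ℝ)
    (hB : ∀ i j k l, B i j k l =
      f k * f l * (1 + f i) * (1 + f j) - f i * f j * (1 + f k) * (1 + f l))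
    (Q : ℕ → ℝ)
    (hQ : ∀ i, Q i = w ^ 2 * ∑ j ∈ Icc 1 N, ∑ l ∈ Icc 1 N, ∑ k ∈ Icc 1 N,
      if i + j = k + l then ρ (min (min i j) (min k l)) * B i j k l else 0) :
    w * ∑ i ∈ Icc 1 N, Q i = 0 ∧
      w * ∑ i ∈ Icc 1 N, Q i * (c * i + d) = 0 :=
  discrete_mass_energy_conservation_general N w c d f ρ B hB Q hQ
end

section
/- With the notation of the discrete collision operator, if f_i > 0 for all i then Σ_{i=1}^N Q_i · (ln(1+f_i) − ln f_i) ≥ 0. -/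
/-! The kernel `G i j k l = [i + j = k + l] ρ(min) B i j k l` is symmetric under
`(i, j, k, l) ↦ (j, i, l, k)` and antisymmetric under `(i, j, k, l) ↦ (k, l, i, j)`, so
`4 Σ G φᵢ = Σ G (φᵢ + φⱼ - φₖ - φₗ)` (the discrete weak form). For `φ = ln (1 + f) - ln f`
each summand is `ρ (y - x) (ln y - ln x) ≥ 0` with `x = fᵢ fⱼ (1 + fₖ) (1 + fₗ)` and
`y = fₖ fₗ (1 + fᵢ) (1 + fⱼ)`, by monotonicity of `ln`. -/

open Finset

section PairSymmetries

variable {α M : Type*} [AddCommMonoid M] {s : Finset α} {F G : α → α → α → α → M}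

theorem sum_eq_of_swap_within_pairs (h : ∀ i j k l, F j i l k = G i j k l) :
    ∑ i ∈ s, ∑ j ∈ s, ∑ k ∈ s, ∑ l ∈ s, F i j k l =
      ∑ i ∈ s, ∑ j ∈ s, ∑ k ∈ s, ∑ l ∈ s, G i j k l := by
  rw [sum_comm]
  refine sum_congr rfl fun _ _ => sum_congr rfl fun _ _ => ?_
  rw [sum_comm]
  simp only [h]

theorem sum_eq_of_exchange_pairs (h : ∀ i j k l, F k l i j = G i j k l) :
    ∑ i ∈ s, ∑ j ∈ s, ∑ k ∈ s, ∑ l ∈ s, F i j k l =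
      ∑ i ∈ s, ∑ j ∈ s, ∑ k ∈ s, ∑ l ∈ s, G i j k l := by
  have as_pairs (H : α → α → α → α → M) : ∑ i ∈ s, ∑ j ∈ s, ∑ k ∈ s, ∑ l ∈ s, H i j k l =
      ∑ p ∈ s ×ˢ s, ∑ q ∈ s ×ˢ s, H p.1 p.2 q.1 q.2 := by
    simp only [sum_product]
  rw [as_pairs, as_pairs, sum_comm]
  simp only [h]

end PairSymmetries

theorem four_mul_sum_mul_eq_sum_mul_add_sub_sub {α R : Type*} [CommRing R] (s : Finset α)
    (G : α → α → α → α → R) (φ : α → R)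
    (hswap : ∀ i j k l, G j i l k = G i j k l) (hexch : ∀ i j k l, G k l i j = -G i j k l) :
    4 * ∑ i ∈ s, ∑ j ∈ s, ∑ k ∈ s, ∑ l ∈ s, G i j k l * φ i =
      ∑ i ∈ s, ∑ j ∈ s, ∑ k ∈ s, ∑ l ∈ s, G i j k l * (φ i + φ j - φ k - φ l) := by
  have hj : ∑ i ∈ s, ∑ j ∈ s, ∑ k ∈ s, ∑ l ∈ s, G i j k l * φ j =
      ∑ i ∈ s, ∑ j ∈ s, ∑ k ∈ s, ∑ l ∈ s, G i j k l * φ i :=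
    sum_eq_of_swap_within_pairs fun i j k l => by rw [hswap]
  have hl : ∑ i ∈ s, ∑ j ∈ s, ∑ k ∈ s, ∑ l ∈ s, G i j k l * φ l =
      ∑ i ∈ s, ∑ j ∈ s, ∑ k ∈ s, ∑ l ∈ s, G i j k l * φ k :=
    sum_eq_of_swap_within_pairs fun i j k l => by rw [hswap]
  have hk : ∑ i ∈ s, ∑ j ∈ s, ∑ k ∈ s, ∑ l ∈ s, G i j k l * φ k =
      -∑ i ∈ s, ∑ j ∈ s, ∑ k ∈ s, ∑ l ∈ s, G i j k l * φ i := by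
    simp only [← sum_neg_distrib]
    exact sum_eq_of_exchange_pairs fun i j k l => by rw [hexch, neg_mul]
  simp only [mul_add, mul_sub, sum_add_distrib, sum_sub_distrib]
  rw [hj, hl, hk]
  ring

theorem collision_mul_log_ratio_nonneg {a b c d : ℝ} (ha : 0 < a) (hb : 0 < b) (hc : 0 < c)
    (hd : 0 < d) :
    0 ≤ (c * d * (1 + a) * (1 + b) - a * b * (1 + c) * (1 + d)) *
      (Real.log (1 + a) - Real.log a + (Real.log (1 + b) - Real.log b)
        - (Real.log (1 + c) - Real.log c) - (Real.log (1 + d) - Real.log d)) := by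
  have hx : 0 < a * b * (1 + c) * (1 + d) := by positivity
  have hy : 0 < c * d * (1 + a) * (1 + b) := by positivity
  have hlog : Real.log (1 + a) - Real.log a + (Real.log (1 + b) - Real.log b)
        - (Real.log (1 + c) - Real.log c) - (Real.log (1 + d) - Real.log d) =
      Real.log (c * d * (1 + a) * (1 + b)) - Real.log (a * b * (1 + c) * (1 + d)) := by
    simp (disch := positivity) only [Real.log_mul]
    ring
  rw [hlog, mul_comm]
  exact (monovaryOn_id_iff.2 Real.strictMonoOn_log.monotoneOn).sub_mul_sub_nonneg hx hy

theorem discrete_H_theorem_general (N : ℕ) (w : ℝ) (f ρ : ℕ → ℝ)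
    (hρ : ∀ i, 0 ≤ ρ i) (hf : ∀ i ∈ Icc 1 N, 0 < f i)
    (B : ℕ → ℕ → ℕ → ℕ → ℝ)
    (hB : ∀ i j k l, B i j k l =
      f k * f l * (1 + f i) * (1 + f j) - f i * f j * (1 + f k) * (1 + f l))
    (Q : ℕ → ℝ)
    (hQ : ∀ i, Q i = w ^ 2 * ∑ j ∈ Icc 1 N, ∑ l ∈ Icc 1 N, ∑ k ∈ Icc 1 N,
      if i + j = k + l then ρ (min (min i j) (min k l)) * B i j k l else 0) :
    0 ≤ ∑ i ∈ Icc 1 N, Q i * (Real.log (1 + f i) - Real.log (f i)) := by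
  let φ : ℕ → ℝ := fun i => Real.log (1 + f i) - Real.log (f i)
  let G : ℕ → ℕ → ℕ → ℕ → ℝ := fun i j k l =>
    if i + j = k + l then ρ (min (min i j) (min k l)) * B i j k l else 0
  have hswap (i j k l : ℕ) : G j i l k = G i j k l := by
    simp only [G, hB, add_comm j i, add_comm l k, min_comm j i, min_comm l k]
    split_ifs <;> ring
  have hexch (i j k l : ℕ) : G k l i j = -G i j k l := by
    simp only [G, hB, eq_comm (a := k + l), min_comm (min k l)]
    split_ifs <;> ring
  have hsum : ∑ i ∈ Icc 1 N, Q i * φ i =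
      w ^ 2 * ∑ i ∈ Icc 1 N, ∑ j ∈ Icc 1 N, ∑ k ∈ Icc 1 N, ∑ l ∈ Icc 1 N, G i j k l * φ i := by
    simp only [hQ, mul_sum, sum_mul, mul_assoc]
    refine sum_congr rfl fun _ _ => sum_congr rfl fun _ _ => sum_comm
  have hterm : ∀ i ∈ Icc 1 N, ∀ j ∈ Icc 1 N, ∀ k ∈ Icc 1 N, ∀ l ∈ Icc 1 N,
      0 ≤ G i j k l * (φ i + φ j - φ k - φ l) := by
    intro i hi j hj k hk l hl
    simp only [G]
    split_ifs
    · rw [hB, mul_assoc]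
      exact mul_nonneg (hρ _)
        (collision_mul_log_ratio_nonneg (hf i hi) (hf j hj) (hf k hk) (hf l hl))
    · simp
  show 0 ≤ ∑ i ∈ Icc 1 N, Q i * φ i
  rw [hsum]
  refine mul_nonneg (sq_nonneg w) (nonneg_of_mul_nonneg_right ?_ four_pos)
  rw [four_mul_sum_mul_eq_sum_mul_add_sub_sub _ G φ hswap hexch]
  exact sum_nonneg fun i hi => sum_nonneg fun j hj => sum_nonneg fun k hk =>
    sum_nonneg fun l hl => hterm i hi j hj k hk l hl

/-- Discrete H-theorem (entropy dissipation inequality): if `f_i > 0` for all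
grid indices and `ρ ≥ 0`, then `Σᵢ Qᵢ (ln(1+fᵢ) − ln fᵢ) ≥ 0`. -/
theorem discrete_H_theorem (N : ℕ) (w : ℝ) (hw : 0 < w) (f ρ : ℕ → ℝ)
    (hρ : ∀ i, 0 ≤ ρ i) (hf : ∀ i ∈ Icc 1 N, 0 < f i)
    (B : ℕ → ℕ → ℕ → ℕ → ℝ)
    (hB : ∀ i j k l, B i j k l =
      f k * f l * (1 + f i) * (1 + f j) - f i * f j * (1 + f k) * (1 + f l))
    (Q : ℕ → ℝ)
    (hQ : ∀ i, Q i = w ^ 2 * ∑ j ∈ Icc 1 N, ∑ l ∈ Icc 1 N, ∑ k ∈ Icc 1 N,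
      if i + j = k + l then ρ (min (min i j) (min k l)) * B i j k l else 0) :
    0 ≤ ∑ i ∈ Icc 1 N, Q i * (Real.log (1 + f i) - Real.log (f i)) :=
  discrete_H_theorem_general N w f ρ hρ hf B hB Q hQ
end

section
/- Let f : {1,…,N} → ℝ₊ solve the ODE system ρ(ε_i) (d f_i/dt) = Q_i(f(t)) with ρ(ε_i) > 0 and f_i(t) > 0 for all t, where Q is the discrete boson collision operator. Then the discrete entropy S(t) = w Σ_{i=1}^N ρ(ε_i) [(1+f_i) ln(1+f_i) − f_i ln f_i] is nondecreasing in t. -/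
open Finset Real

/-! The entropy production is `dS/dt = w Σᵢ h'(fᵢ) Qᵢ`, the factor `ρ(εᵢ)` cancelling against the
ODE. The collision summand `W i j k l` is invariant under `(i,j,k,l) ↦ (j,i,l,k)` and changes sign
under `(i,j) ↔ (k,l)`, so `Σ φᵢ Wᵢⱼₖₗ = ¼ Σ (φᵢ + φⱼ − φₖ − φₗ) Wᵢⱼₖₗ`. For `φ = h'` the bracket is
`log gain − log loss`, while `W = ρ · (gain − loss)` with `ρ ≥ 0`, so every term is nonnegative
by monotonicity of `log`. -/

section Symmetrization

variable {ι M R : Type*} [AddCommMonoid M] [CommRing R] (s : Finset ι)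

theorem sum_quadruple_comm_pairs (F : ι → ι → ι → ι → M) :
    ∑ i ∈ s, ∑ j ∈ s, ∑ l ∈ s, ∑ k ∈ s, F i j l k =
      ∑ i ∈ s, ∑ j ∈ s, ∑ l ∈ s, ∑ k ∈ s, F l k i j := by
  calc ∑ i ∈ s, ∑ j ∈ s, ∑ l ∈ s, ∑ k ∈ s, F i j l k
      = ∑ p ∈ s ×ˢ s, ∑ q ∈ s ×ˢ s, F p.1 p.2 q.1 q.2 := by simp only [sum_product]
    _ = ∑ q ∈ s ×ˢ s, ∑ p ∈ s ×ˢ s, F p.1 p.2 q.1 q.2 := sum_comm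
    _ = ∑ i ∈ s, ∑ j ∈ s, ∑ l ∈ s, ∑ k ∈ s, F l k i j := by simp only [sum_product]

theorem four_mul_sum_mul_eq_sum_symmetrized (φ : ι → R) (W : ι → ι → ι → ι → R)
    (hswap : ∀ i j k l, W j i l k = W i j k l) (hexch : ∀ i j k l, W k l i j = -W i j k l) :
    4 * ∑ i ∈ s, ∑ j ∈ s, ∑ l ∈ s, ∑ k ∈ s, φ i * W i j k l =
      ∑ i ∈ s, ∑ j ∈ s, ∑ l ∈ s, ∑ k ∈ s, (φ i + φ j - φ k - φ l) * W i j k l := by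
  have hj : ∑ i ∈ s, ∑ j ∈ s, ∑ l ∈ s, ∑ k ∈ s, φ j * W i j k l =
      ∑ i ∈ s, ∑ j ∈ s, ∑ l ∈ s, ∑ k ∈ s, φ i * W i j k l := by
    rw [sum_comm]
    refine sum_congr rfl fun i _ => sum_congr rfl fun j _ => ?_
    rw [sum_comm]
    exact sum_congr rfl fun l _ => sum_congr rfl fun k _ => by rw [hswap]
  have hk : ∑ i ∈ s, ∑ j ∈ s, ∑ l ∈ s, ∑ k ∈ s, φ k * W i j k l =
      -∑ i ∈ s, ∑ j ∈ s, ∑ l ∈ s, ∑ k ∈ s, φ j * W i j k l := by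
    rw [sum_quadruple_comm_pairs]
    simp only [← sum_neg_distrib, ← mul_neg, ← hexch, hswap]
  have hl : ∑ i ∈ s, ∑ j ∈ s, ∑ l ∈ s, ∑ k ∈ s, φ l * W i j k l =
      -∑ i ∈ s, ∑ j ∈ s, ∑ l ∈ s, ∑ k ∈ s, φ i * W i j k l := by
    rw [sum_quadruple_comm_pairs]
    simp only [← sum_neg_distrib, ← mul_neg, ← hexch, hswap]
  simp only [add_mul, sub_mul, sum_add_distrib, sum_sub_distrib]
  linear_combination -2 * hj + hk + hl

end Symmetrization

def bosonCollisionTerm (ρ g : ℕ → ℝ) (i j k l : ℕ) : ℝ :=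
  if i + j = k + l then
    ρ (min (min i j) (min k l)) *
      (g k * g l * (1 + g i) * (1 + g j) - g i * g j * (1 + g k) * (1 + g l))
  else 0

theorem bosonCollisionTerm_swap (ρ g : ℕ → ℝ) (i j k l : ℕ) :
    bosonCollisionTerm ρ g j i l k = bosonCollisionTerm ρ g i j k l := by
  simp only [bosonCollisionTerm, add_comm j i, add_comm l k, min_comm j i, min_comm l k]
  split_ifs <;> ring

theorem bosonCollisionTerm_exchange (ρ g : ℕ → ℝ) (i j k l : ℕ) :
    bosonCollisionTerm ρ g k l i j = -bosonCollisionTerm ρ g i j k l := by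
  simp only [bosonCollisionTerm, eq_comm (a := k + l), min_comm (min k l)]
  split_ifs <;> ring

noncomputable def boseEntropy (x : ℝ) : ℝ := (1 + x) * log (1 + x) - x * log x

noncomputable def boseEntropyDeriv (x : ℝ) : ℝ := log (1 + x) - log x

theorem hasDerivAt_boseEntropy {x : ℝ} (hx : 0 < x) :
    HasDerivAt boseEntropy (boseEntropyDeriv x) x := by
  have h1 : HasDerivAt (fun y => (1 + y) * log (1 + y)) (log (1 + x) + 1) x :=
    (hasDerivAt_mul_log (by positivity)).comp_const_add 1 x
  refine (h1.fun_sub (hasDerivAt_mul_log hx.ne')).congr_deriv ?_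
  rw [boseEntropyDeriv]; ring

theorem sub_mul_log_sub_log_nonneg {a b : ℝ} (ha : 0 < a) (hb : 0 < b) :
    0 ≤ (a - b) * (log a - log b) :=
  (monotoneOn_id.monovaryOn strictMonoOn_log.monotoneOn).sub_mul_sub_nonneg hb ha

theorem boseEntropyDeriv_add_sub_sub_eq {a b c d : ℝ} (ha : 0 < a) (hb : 0 < b) (hc : 0 < c)
    (hd : 0 < d) :
    boseEntropyDeriv a + boseEntropyDeriv b - boseEntropyDeriv c - boseEntropyDeriv d =
      log (c * d * (1 + a) * (1 + b)) - log (a * b * (1 + c) * (1 + d)) := by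
  simp only [boseEntropyDeriv]
  rw [log_mul, log_mul, log_mul, log_mul, log_mul, log_mul] <;> first | positivity | ring

theorem boseEntropyDeriv_mul_bosonCollisionTerm_nonneg {ρ g : ℕ → ℝ} (hρ : ∀ n, 0 ≤ ρ n)
    {i j k l : ℕ} (hi : 0 < g i) (hj : 0 < g j) (hk : 0 < g k) (hl : 0 < g l) :
    0 ≤ (boseEntropyDeriv (g i) + boseEntropyDeriv (g j) - boseEntropyDeriv (g k) -
      boseEntropyDeriv (g l)) * bosonCollisionTerm ρ g i j k l := by
  rw [boseEntropyDeriv_add_sub_sub_eq hi hj hk hl, bosonCollisionTerm]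
  split_ifs
  · rw [mul_left_comm, mul_comm (log _ - log _)]
    exact mul_nonneg (hρ _) (sub_mul_log_sub_log_nonneg (by positivity) (by positivity))
  · rw [mul_zero]

theorem sum_boseEntropyDeriv_mul_sum_bosonCollisionTerm_nonneg (s : Finset ℕ) {ρ g : ℕ → ℝ}
    (hρ : ∀ n, 0 ≤ ρ n) (hg : ∀ i ∈ s, 0 < g i) :
    0 ≤ ∑ i ∈ s, boseEntropyDeriv (g i) *
      ∑ j ∈ s, ∑ l ∈ s, ∑ k ∈ s, bosonCollisionTerm ρ g i j k l := by
  have hsymm := four_mul_sum_mul_eq_sum_symmetrized s (fun i => boseEntropyDeriv (g i))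
    (bosonCollisionTerm ρ g) (bosonCollisionTerm_swap ρ g) (bosonCollisionTerm_exchange ρ g)
  have hterms := sum_nonneg fun i hi => sum_nonneg fun j hj => sum_nonneg fun l hl =>
    sum_nonneg fun k hk =>
      boseEntropyDeriv_mul_bosonCollisionTerm_nonneg hρ (hg i hi) (hg j hj) (hg k hk) (hg l hl)
  simp only [mul_sum]
  linarith

/-- Entropy growth for the semidiscrete scheme: if `f` solves
`ρ(ε_i) dfᵢ/dt = Qᵢ(f(t))` with `ρ(ε_i) > 0` and `fᵢ(t) > 0`, then the discrete
entropy `S(t) = w Σᵢ ρ(ε_i) [(1+fᵢ)ln(1+fᵢ) − fᵢ ln fᵢ]` is nondecreasing. -/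
theorem discrete_entropy_nondecreasing (N : ℕ) (w : ℝ) (hw : 0 < w)
    (ρ : ℕ → ℝ) (hρ : ∀ i, 0 ≤ ρ i) (hρpos : ∀ i ∈ Icc 1 N, 0 < ρ i)
    (Q : (ℕ → ℝ) → ℕ → ℝ)
    (hQ : ∀ (g : ℕ → ℝ) (i : ℕ), Q g i =
      w ^ 2 * ∑ j ∈ Icc 1 N, ∑ l ∈ Icc 1 N, ∑ k ∈ Icc 1 N,
        if i + j = k + l then
          ρ (min (min i j) (min k l)) *
            (g k * g l * (1 + g i) * (1 + g j) -
              g i * g j * (1 + g k) * (1 + g l))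
        else 0)
    (f : ℝ → ℕ → ℝ) (hfpos : ∀ t, ∀ i ∈ Icc 1 N, 0 < f t i)
    (hode : ∀ t : ℝ, ∀ i ∈ Icc 1 N,
      HasDerivAt (fun s => f s i) (Q (f t) i / ρ i) t) :
    Monotone (fun t => w * ∑ i ∈ Icc 1 N,
      ρ i * ((1 + f t i) * Real.log (1 + f t i) - f t i * Real.log (f t i))) := by
  change Monotone fun t => w * ∑ i ∈ Icc 1 N, ρ i * boseEntropy (f t i)
  have hS : ∀ t, HasDerivAt (fun t => w * ∑ i ∈ Icc 1 N, ρ i * boseEntropy (f t i))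
      (w * ∑ i ∈ Icc 1 N, boseEntropyDeriv (f t i) * Q (f t) i) t := by
    intro t
    refine (HasDerivAt.fun_sum fun i hi => ?_).const_mul w
    refine (((hasDerivAt_boseEntropy (hfpos t i hi)).comp t (hode t i hi)).const_mul
      (ρ i)).congr_deriv ?_
    field_simp [(hρpos i hi).ne']
  refine monotone_of_deriv_nonneg (fun t => (hS t).differentiableAt) fun t => ?_
  rw [(hS t).deriv]
  simp only [hQ, mul_left_comm _ (w ^ 2), ← mul_sum]
  exact mul_nonneg (sq_nonneg w) <| mul_nonneg hw.le <|
    sum_boseEntropyDeriv_mul_sum_bosonCollisionTerm_nonneg _ hρ (hfpos t)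
end

section
/- For every pair (M, E) of positive reals there exists α > 0 and β ∈ ℝ such that the generalized Bose-Einstein measure ρ(ε) f_∞(ε) dε = ρ(ε)/(e^{αε+β₊} − 1) dε + |β₋| δ₀, with ρ(ε) = ε²/2, β₊ = max(β,0), β₋ = min(β,0), has total mass M and total energy E, i.e. ∫₀^∞ ρ(ε)/(e^{αε+β₊}−1) dε + |β₋| = M and ∫₀^∞ ε ρ(ε)/(e^{αε+β₊}−1) dε = E. -/
/-!
Substituting `ε ↦ ε / α` shows that at `β = c ≥ 0` the mass and energy are `α⁻³ m(c)` and
`α⁻⁴ e(c)`, where `m`, `e` are the corresponding moments at `α = 1`. The energy equation fixes `α`,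
and then the mass equation becomes `m(c)⁴ / e(c)³ = M⁴ / E³`, whose left side is scale invariant,
continuous in `c`, and decays like `e^{-c}`. If `M⁴ / E³` lies below its value at `c = 0`, the
intermediate value theorem gives `c`; otherwise `c = 0` leaves a mass deficit, which `β ≤ 0` puts
into the condensate.
-/

open MeasureTheory Real Set Filter Topology
open scoped Nat

noncomputable def boseIntegral (k : ℕ) (c : ℝ) : ℝ :=
  ∫ ε in Ioi 0, ε ^ k / (exp (ε + c) - 1)

lemma integral_pow_div_exp_mul_add_sub_one (k : ℕ) {α : ℝ} (hα : 0 < α) (c : ℝ) :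
    ∫ ε in Ioi 0, ε ^ k / (exp (α * ε + c) - 1) = (α ^ (k + 1))⁻¹ * boseIntegral k c := by
  have h := integral_comp_mul_left_Ioi (fun u ↦ u ^ k / (exp (u + c) - 1)) 0 hα
  rw [mul_zero] at h
  calc ∫ ε in Ioi 0, ε ^ k / (exp (α * ε + c) - 1)
      = ∫ ε in Ioi 0, (α ^ k)⁻¹ * ((α * ε) ^ k / (exp (α * ε + c) - 1)) := by
        congr 1; ext ε; rw [mul_pow]; field_simp
    _ = (α ^ (k + 1))⁻¹ * boseIntegral k c := by
        rw [integral_const_mul, h, boseIntegral, smul_eq_mul, ← mul_assoc, pow_succ, mul_inv]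

lemma exp_add_sub_one_pos {ε c : ℝ} (hε : 0 < ε) (hc : 0 ≤ c) : 0 < exp (ε + c) - 1 :=
  sub_pos.2 (one_lt_exp_iff.2 (by linarith))

lemma mul_exp_half_le_exp_sub_one {x : ℝ} (hx : 0 ≤ x) : x * exp (x / 2) ≤ exp x - 1 := by
  have h_sinh : x / 2 ≤ (exp (x / 2) - exp (-(x / 2))) / 2 := by
    rw [← sinh_eq]; exact self_le_sinh_iff.2 (by positivity)
  have h_sq : exp x = exp (x / 2) * exp (x / 2) := by rw [← exp_add, add_halves]
  have h_inv : exp (-(x / 2)) * exp (x / 2) = 1 := by rw [← exp_add, neg_add_cancel, exp_zero]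
  nlinarith [exp_pos (x / 2)]

lemma pow_succ_div_exp_add_sub_one_le (k : ℕ) {ε c : ℝ} (hε : 0 < ε) (hc : 0 ≤ c) :
    ε ^ (k + 1) / (exp (ε + c) - 1) ≤ ε ^ k * exp (-(ε / 2)) := by
  rw [div_le_iff₀ (exp_add_sub_one_pos hε hc)]
  calc ε ^ (k + 1) = ε ^ k * exp (-(ε / 2)) * (ε * exp (ε / 2)) := by
        rw [pow_succ, mul_mul_mul_comm, ← exp_add, neg_add_cancel, exp_zero, mul_one]
    _ ≤ ε ^ k * exp (-(ε / 2)) * (exp (ε + c) - 1) := by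
        gcongr
        exact (mul_exp_half_le_exp_sub_one hε.le).trans (by gcongr; linarith)

lemma integrableOn_pow_mul_exp_neg_half (k : ℕ) :
    IntegrableOn (fun ε : ℝ ↦ ε ^ k * exp (-(ε / 2))) (Ioi 0) := by
  refine (integrableOn_rpow_mul_exp_neg_mul_rpow (s := k) (p := 1) (b := 1 / 2)
    (by linarith [k.cast_nonneg (α := ℝ)]) one_pos one_half_pos).congr_fun (fun ε _ ↦ ?_)
    measurableSet_Ioi
  simp only [rpow_natCast, rpow_one]
  ring_nf

lemma continuousOn_pow_div_exp_add_sub_one (k : ℕ) {c : ℝ} (hc : 0 ≤ c) :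
    ContinuousOn (fun ε : ℝ ↦ ε ^ k / (exp (ε + c) - 1)) (Ioi 0) :=
  ContinuousOn.div (by fun_prop) (by fun_prop) fun _ hε ↦ (exp_add_sub_one_pos hε hc).ne'

lemma integrableOn_pow_succ_div_exp_add_sub_one (k : ℕ) {c : ℝ} (hc : 0 ≤ c) :
    IntegrableOn (fun ε : ℝ ↦ ε ^ (k + 1) / (exp (ε + c) - 1)) (Ioi 0) := by
  refine (integrableOn_pow_mul_exp_neg_half k).mono'
    ((continuousOn_pow_div_exp_add_sub_one _ hc).aestronglyMeasurable measurableSet_Ioi) ?_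
  filter_upwards [ae_restrict_mem measurableSet_Ioi] with ε hε
  rw [norm_of_nonneg (div_nonneg (pow_pos hε _).le (exp_add_sub_one_pos hε hc).le)]
  exact pow_succ_div_exp_add_sub_one_le k hε hc

lemma continuousOn_boseIntegral (k : ℕ) : ContinuousOn (boseIntegral (k + 1)) (Ici 0) := by
  refine continuousOn_of_dominated (bound := fun ε ↦ ε ^ k * exp (-(ε / 2)))
    (fun c hc ↦ (integrableOn_pow_succ_div_exp_add_sub_one k hc).aestronglyMeasurable)
    (fun c hc ↦ ?_) (integrableOn_pow_mul_exp_neg_half k) ?_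
  · filter_upwards [ae_restrict_mem measurableSet_Ioi] with ε hε
    rw [norm_of_nonneg (div_nonneg (pow_pos hε _).le (exp_add_sub_one_pos hε hc).le)]
    exact pow_succ_div_exp_add_sub_one_le k hε hc
  · filter_upwards [ae_restrict_mem measurableSet_Ioi] with ε hε
    exact ContinuousOn.div continuousOn_const (by fun_prop)
      fun c hc ↦ (exp_add_sub_one_pos hε hc).ne'

lemma integral_exp_neg_mul_pow (n : ℕ) : ∫ x in Ioi (0 : ℝ), exp (-x) * x ^ n = n ! := by
  simpa using (Gamma_eq_integral (s := n + 1) (by positivity)).symm.trans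
    (Gamma_nat_eq_factorial n)

lemma integrableOn_exp_neg_mul_pow (n : ℕ) :
    IntegrableOn (fun x : ℝ ↦ exp (-x) * x ^ n) (Ioi 0) := by
  simpa using GammaIntegral_convergent (s := n + 1) (by positivity)

lemma boseIntegral_le_exp_neg_mul (k : ℕ) {c : ℝ} (hc : 0 ≤ c) :
    boseIntegral (k + 1) c ≤ exp (-c) * boseIntegral (k + 1) 0 := by
  rw [boseIntegral, boseIntegral, ← integral_const_mul]
  refine setIntegral_mono_on (integrableOn_pow_succ_div_exp_add_sub_one k hc)
    ((integrableOn_pow_succ_div_exp_add_sub_one k le_rfl).const_mul _) measurableSet_Ioi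
    fun ε (hε : 0 < ε) ↦ ?_
  have hε0 := exp_add_sub_one_pos hε le_rfl
  rw [add_zero] at hε0 ⊢
  have h_denom : exp c * (exp ε - 1) ≤ exp (ε + c) - 1 := by
    rw [exp_add]; nlinarith [one_le_exp hc, exp_pos ε]
  calc ε ^ (k + 1) / (exp (ε + c) - 1) ≤ ε ^ (k + 1) / (exp c * (exp ε - 1)) := by
        gcongr
    _ = exp (-c) * (ε ^ (k + 1) / (exp ε - 1)) := by
        rw [exp_neg]; field_simp

lemma exp_neg_mul_factorial_le_boseIntegral (k : ℕ) {c : ℝ} (hc : 0 ≤ c) :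
    exp (-c) * (k + 1)! ≤ boseIntegral (k + 1) c := by
  rw [boseIntegral, ← integral_exp_neg_mul_pow, ← integral_const_mul]
  refine setIntegral_mono_on ((integrableOn_exp_neg_mul_pow _).const_mul _)
    (integrableOn_pow_succ_div_exp_add_sub_one k hc) measurableSet_Ioi fun ε (hε : 0 < ε) ↦ ?_
  have hε0 := exp_add_sub_one_pos hε hc
  rw [le_div_iff₀ hε0, ← mul_assoc, ← exp_add, mul_right_comm]
  calc exp (-c + -ε) * (exp (ε + c) - 1) * ε ^ (k + 1)
      ≤ exp (-c + -ε) * exp (ε + c) * ε ^ (k + 1) := by gcongr; linarith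
    _ = ε ^ (k + 1) := by rw [← exp_add, show -c + -ε + (ε + c) = 0 by ring, exp_zero, one_mul]

lemma boseIntegral_pos (k : ℕ) {c : ℝ} (hc : 0 ≤ c) : 0 < boseIntegral (k + 1) c :=
  (mul_pos (exp_pos _) (by positivity)).trans_le (exp_neg_mul_factorial_le_boseIntegral k hc)

lemma tendsto_boseIntegral_pow_four_div_pow_three (j k : ℕ) :
    Tendsto (fun c ↦ boseIntegral (j + 1) c ^ 4 / boseIntegral (k + 1) c ^ 3) atTop (𝓝 0) := by
  set A := boseIntegral (j + 1) 0
  set B : ℝ := ↑(k + 1)!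
  refine squeeze_zero' ?_ ?_ (by
    simpa using tendsto_exp_neg_atTop_nhds_zero.mul_const (A ^ 4 / B ^ 3))
  · filter_upwards [eventually_ge_atTop 0] with c hc
    have := boseIntegral_pos j hc
    have := boseIntegral_pos k hc
    positivity
  · filter_upwards [eventually_ge_atTop 0] with c hc
    calc boseIntegral (j + 1) c ^ 4 / boseIntegral (k + 1) c ^ 3
        ≤ (exp (-c) * A) ^ 4 / (exp (-c) * B) ^ 3 := by
          gcongr
          · exact (boseIntegral_pos j hc).le
          · exact boseIntegral_le_exp_neg_mul j hc
          · exact exp_neg_mul_factorial_le_boseIntegral k hc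
      _ = exp (-c) * (A ^ 4 / B ^ 3) := by field_simp

lemma exists_inv_pow_four_mul_eq {e E : ℝ} (he : 0 < e) (hE : 0 < E) :
    ∃ α, 0 < α ∧ (α ^ 4)⁻¹ * e = E := by
  refine ⟨(e / E) ^ (4⁻¹ : ℝ), by positivity, ?_⟩
  rw [← Nat.cast_ofNat, rpow_inv_natCast_pow (by positivity) four_ne_zero]
  field_simp

lemma inv_pow_three_mul_pow_four {α m e E : ℝ} (hα : α ≠ 0) (he : e ≠ 0)
    (hE : (α ^ 4)⁻¹ * e = E) : ((α ^ 3)⁻¹ * m) ^ 4 = m ^ 4 / e ^ 3 * E ^ 3 := by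
  subst hE
  field_simp

theorem exists_equilibrium_of_moments {m e : ℝ → ℝ} (hm : ContinuousOn m (Ici 0))
    (he : ContinuousOn e (Ici 0)) (hm_nonneg : ∀ c, 0 ≤ c → 0 ≤ m c)
    (he_pos : ∀ c, 0 ≤ c → 0 < e c)
    (h_ratio : Tendsto (fun c ↦ m c ^ 4 / e c ^ 3) atTop (𝓝 0)) {M E : ℝ} (hM : 0 < M)
    (hE : 0 < E) :
    ∃ α β, 0 < α ∧ (α ^ 3)⁻¹ * m (max β 0) + |min β 0| = M ∧
      (α ^ 4)⁻¹ * e (max β 0) = E := by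
  by_cases h_cond : m 0 ^ 4 / e 0 ^ 3 ≤ M ^ 4 / E ^ 3
  · obtain ⟨α, hα, h_energy⟩ := exists_inv_pow_four_mul_eq (he_pos 0 le_rfl) hE
    have h_mass : (α ^ 3)⁻¹ * m 0 ≤ M := by
      have := hm_nonneg 0 le_rfl
      rwa [← pow_le_pow_iff_left₀ (by positivity) hM.le four_ne_zero,
        inv_pow_three_mul_pow_four hα.ne' (he_pos 0 le_rfl).ne' h_energy,
        ← le_div_iff₀ (by positivity)]
    refine ⟨α, (α ^ 3)⁻¹ * m 0 - M, hα, ?_, ?_⟩ <;>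
      rw [max_eq_right (sub_nonpos.2 h_mass)]
    · rw [min_eq_left (sub_nonpos.2 h_mass), abs_of_nonpos (sub_nonpos.2 h_mass)]
      ring
    · exact h_energy
  · obtain ⟨c₁, hc₁, hc₁_nonneg⟩ :=
      ((h_ratio.eventually (gt_mem_nhds (show 0 < M ^ 4 / E ^ 3 by positivity))).and
        (eventually_ge_atTop 0)).exists
    have h_cont : ContinuousOn (fun c ↦ m c ^ 4 / e c ^ 3) (Icc 0 c₁) :=
      ((hm.pow 4).div (he.pow 3) fun c hc ↦ (pow_pos (he_pos c hc) 3).ne').mono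
        Icc_subset_Ici_self
    obtain ⟨c, ⟨hc, -⟩, h_eq : m c ^ 4 / e c ^ 3 = M ^ 4 / E ^ 3⟩ :=
      intermediate_value_Icc' hc₁_nonneg h_cont ⟨hc₁.le, (not_le.1 h_cond).le⟩
    obtain ⟨α, hα, h_energy⟩ := exists_inv_pow_four_mul_eq (he_pos c hc) hE
    have h_mass : (α ^ 3)⁻¹ * m c = M := by
      have := hm_nonneg c hc
      rw [← pow_left_inj₀ (by positivity) hM.le four_ne_zero,
        inv_pow_three_mul_pow_four hα.ne' (he_pos c hc).ne' h_energy, h_eq]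
      field_simp
    refine ⟨α, c, hα, ?_, ?_⟩ <;> rw [max_eq_left hc]
    · rw [min_eq_right hc, abs_zero, add_zero, h_mass]
    · exact h_energy

/-- Existence of generalized Bose-Einstein equilibria: for every pair `(M, E)` of
positive reals there exist `α > 0` and `β ∈ ℝ` such that the measure
`ρ(ε)/(e^{αε+β₊}−1) dε + |β₋| δ₀` with `ρ(ε) = ε²/2` has total mass `M` and
total energy `E`. -/
theorem generalized_BE_equilibrium (M E : ℝ) (hM : 0 < M) (hE : 0 < E) :
    ∃ α β : ℝ, 0 < α ∧
      (∫ ε in Set.Ioi (0 : ℝ), ε ^ 2 / 2 / (Real.exp (α * ε + max β 0) - 1)) +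
          |min β 0| = M ∧
      (∫ ε in Set.Ioi (0 : ℝ), ε * (ε ^ 2 / 2) / (Real.exp (α * ε + max β 0) - 1)) =
        E := by
  obtain ⟨α, β, hα, h_mass, h_energy⟩ := exists_equilibrium_of_moments
    (m := fun c ↦ boseIntegral 2 c / 2) (e := fun c ↦ boseIntegral 3 c / 2)
    ((continuousOn_boseIntegral 1).div_const 2) ((continuousOn_boseIntegral 2).div_const 2)
    (fun c hc ↦ (half_pos (boseIntegral_pos 1 hc)).le)
    (fun c hc ↦ half_pos (boseIntegral_pos 2 hc))
    (by
      simpa using ((tendsto_boseIntegral_pow_four_div_pow_three 1 2).div_const 2).congr fun c ↦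
        (by ring : _ = (boseIntegral 2 c / 2) ^ 4 / (boseIntegral 3 c / 2) ^ 3)) hM hE
  refine ⟨α, β, hα, ?_, ?_⟩
  · calc _ = (∫ ε in Ioi 0, ε ^ 2 / (exp (α * ε + max β 0) - 1)) / 2 + |min β 0| := by
          rw [← integral_div]; congr 2; ext ε; ring
      _ = M := by rw [integral_pow_div_exp_mul_add_sub_one 2 hα, ← h_mass, mul_div_assoc]
  · calc _ = (∫ ε in Ioi 0, ε ^ 3 / (exp (α * ε + max β 0) - 1)) / 2 := by
          rw [← integral_div]; congr 1; ext ε; ring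
      _ = E := by rw [integral_pow_div_exp_mul_add_sub_one 3 hα, ← h_energy, mul_div_assoc]
end

section
/- Given mass M > 0 and energy E > 0 with ρ(ε) = ε²/2, let α = (3ζ(4)/E)^{1/4} be the unique solution of ∫₀^∞ ρ(ε) ε/(e^{αε}−1) dε = E, and let I_α = ζ(3)/α³ = ζ(3)·(E/(3ζ(4)))^{3/4}. Then condensation occurs (I_α < M) if and only if E < 3ζ(4) M^{4/3}/ζ(3)^{4/3}, and in that case the equilibrium condensate mass fraction is M_c/M = 1 − (ζ(3)/M)·(E/(3ζ(4)))^{3/4}. -/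
/-!
Expanding `1 / (e^{αε} - 1) = Σ_{n ≥ 1} e^{-nαε}` and integrating term by term against
`ε^{s-1}` gives the Bose integral `∫₀^∞ ε^{s-1} / (e^{αε} - 1) dε = Γ(s) ζ(s) / α^s`. For the
harmonic-trap density of states `ε² / 2`, the energy at inverse temperature `α` is therefore
`3 ζ(4) / α⁴` and the mass `ζ(3) / α³`, so the given `α` matches the energy `E`. The criticality
condition `ζ(3) / α³ < M` then becomes an inequality between `E` and `M` by raising both sides to
the power `4/3`.
-/

open MeasureTheory

/-- The Riemann zeta function on the reals (for `s > 1`), `ζ(s) = Σ_{n≥1} n^{-s}`. -/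
noncomputable def zetaR (s : ℝ) : ℝ := ∑' n : ℕ, 1 / ((n : ℝ) + 1) ^ s

open Set Real

lemma summable_zetaR {s : ℝ} (hs : 1 < s) :
    Summable fun n : ℕ => 1 / ((n : ℝ) + 1) ^ s := by
  exact_mod_cast (summable_nat_add_iff 1).mpr (summable_one_div_nat_rpow.mpr hs)

lemma zetaR_pos {s : ℝ} (hs : 1 < s) : 0 < zetaR s :=
  (summable_zetaR hs).tsum_pos (fun _ => by positivity) 0 (by norm_num)

lemma hasSum_exp_neg_nat_add_one_mul {y : ℝ} (hy : 0 < y) :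
    HasSum (fun n : ℕ => exp (-(((n : ℝ) + 1) * y))) (1 / (exp y - 1)) := by
  have hterm :
      (fun n : ℕ => exp (-(((n : ℝ) + 1) * y))) = fun n => exp (-y) * exp (-y) ^ n := by
    ext n
    rw [← exp_nat_mul, ← exp_add]
    ring_nf
  have hvalue : exp (-y) * (1 - exp (-y))⁻¹ = 1 / (exp y - 1) := by
    have hexp : 1 < exp y := one_lt_exp_iff.mpr hy
    rw [exp_neg]
    field_simp
  rw [hterm, ← hvalue]
  exact (hasSum_geometric_of_lt_one (exp_pos (-y)).le
    (exp_lt_one_iff.mpr (neg_neg_of_pos hy))).mul_left (exp (-y))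

theorem integral_rpow_div_exp_mul_sub_one {s a : ℝ} (hs : 1 < s) (ha : 0 < a) :
    ∫ x in Ioi 0, x ^ (s - 1) / (exp (a * x) - 1) = Gamma s * zetaR s / a ^ s := by
  set F : ℕ → ℝ → ℝ := fun n x => x ^ (s - 1) * exp (-(((n : ℝ) + 1) * a * x))
  have hrate (n : ℕ) : 0 < ((n : ℝ) + 1) * a := by positivity
  have hF_integral (n : ℕ) :
      ∫ x in Ioi 0, F n x = Gamma s / a ^ s * (1 / ((n : ℝ) + 1) ^ s) := by
    rw [integral_rpow_mul_exp_neg_mul_Ioi (by linarith) (hrate n),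
      div_rpow zero_le_one (hrate n).le, one_rpow, mul_rpow (by positivity) ha.le]
    ring
  have hF_integrable (n : ℕ) : IntegrableOn (F n) (Ioi 0) := by
    refine .of_integral_ne_zero ?_
    rw [hF_integral]
    have := Gamma_pos_of_pos (by linarith : 0 < s)
    positivity
  have hF_norm (n : ℕ) : ∫ x in Ioi 0, ‖F n x‖ = ∫ x in Ioi 0, F n x :=
    setIntegral_congr_fun measurableSet_Ioi fun x hx =>
      norm_of_nonneg (mul_nonneg (rpow_nonneg (le_of_lt hx) _) (exp_pos _).le)
  have hsum : HasSum (fun n => ∫ x in Ioi 0, F n x) (Gamma s * zetaR s / a ^ s) := by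
    simp only [hF_integral]
    rw [mul_div_right_comm]
    exact (summable_zetaR hs).hasSum.mul_left _
  have hF_tsum : ∀ x ∈ Ioi (0 : ℝ), ∑' n, F n x = x ^ (s - 1) / (exp (a * x) - 1) := by
    intro x hx
    have hgeom := (hasSum_exp_neg_nat_add_one_mul (mul_pos ha hx)).mul_left (x ^ (s - 1))
    simp only [F, mul_assoc, hgeom.tsum_eq, mul_one_div]
  rw [hsum.unique (hasSum_integral_of_summable_integral_norm hF_integrable
    (by simpa only [hF_norm] using hsum.summable))]
  exact setIntegral_congr_fun measurableSet_Ioi fun x hx => (hF_tsum x hx).symm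

lemma integral_harmonic_trap_energy {a : ℝ} (ha : 0 < a) :
    ∫ ε in Ioi 0, ε ^ 2 / 2 * ε / (exp (a * ε) - 1) = 3 * zetaR 4 / a ^ 4 := by
  have hGamma : Gamma 4 = 6 := by
    rw [show (4 : ℝ) = (3 : ℕ) + 1 by norm_num, Gamma_nat_eq_factorial]
    norm_num [Nat.factorial]
  have hbose := integral_rpow_div_exp_mul_sub_one (s := 4) (by norm_num) ha
  rw [hGamma, show (4 : ℝ) - 1 = (3 : ℕ) by norm_num] at hbose
  simp only [rpow_natCast] at hbose
  calc ∫ ε in Ioi 0, ε ^ 2 / 2 * ε / (exp (a * ε) - 1)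
      = (1 / 2) * ∫ ε in Ioi 0, ε ^ 3 / (exp (a * ε) - 1) := by
        rw [← integral_const_mul]
        exact setIntegral_congr_fun measurableSet_Ioi fun ε _ => by ring
    _ = 3 * zetaR 4 / a ^ 4 := by
        rw [hbose, show (4 : ℝ) = (4 : ℕ) by norm_num, rpow_natCast]
        ring

lemma mul_rpow_div_lt_iff {p K Z M E : ℝ} (hp : 0 < p) (hK : 0 < K) (hZ : 0 < Z)
    (hM : 0 ≤ M) (hE : 0 ≤ E) :
    Z * (E / K) ^ p < M ↔ E < K * M ^ p⁻¹ / Z ^ p⁻¹ := by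
  rw [mul_div_assoc, ← div_rpow hM hZ.le, ← div_lt_iff₀' hK,
    lt_rpow_inv_iff_of_pos (by positivity) (by positivity) hp, lt_div_iff₀' hZ]

/-- Condensation criterion for a 3D harmonic trap: with
`α = (3ζ(4)/E)^{1/4}` matching the energy `E` and `I_α = ζ(3)/α³`, one has
`I_α = ζ(3)(E/(3ζ(4)))^{3/4}`, condensation `I_α < M` occurs iff
`E < 3ζ(4) M^{4/3}/ζ(3)^{4/3}`, and then the condensate mass fraction is
`M_c/M = 1 − (ζ(3)/M)(E/(3ζ(4)))^{3/4}`. -/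
theorem condensation_criterion (M E : ℝ) (hM : 0 < M) (hE : 0 < E)
    (α : ℝ) (hα : α = (3 * zetaR 4 / E) ^ ((1 : ℝ) / 4)) :
    (∫ ε in Set.Ioi (0 : ℝ), ε ^ 2 / 2 * ε / (Real.exp (α * ε) - 1)) = E ∧
    zetaR 3 / α ^ 3 = zetaR 3 * (E / (3 * zetaR 4)) ^ ((3 : ℝ) / 4) ∧
    (zetaR 3 / α ^ 3 < M ↔
      E < 3 * zetaR 4 * M ^ ((4 : ℝ) / 3) / zetaR 3 ^ ((4 : ℝ) / 3)) ∧
    (zetaR 3 / α ^ 3 < M →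
      (M - zetaR 3 / α ^ 3) / M =
        1 - zetaR 3 / M * (E / (3 * zetaR 4)) ^ ((3 : ℝ) / 4)) := by
  have hz4 : 0 < zetaR 4 := zetaR_pos (by norm_num)
  have hz3 : 0 < zetaR 3 := zetaR_pos (by norm_num)
  have hb : 0 < 3 * zetaR 4 / E := by positivity
  have hα_pos : 0 < α := hα ▸ rpow_pos_of_pos hb _
  have hα_pow (n : ℕ) : α ^ n = (3 * zetaR 4 / E) ^ ((n : ℝ) / 4) := by
    rw [hα, ← rpow_mul_natCast hb.le]
    ring_nf
  have hmass : zetaR 3 / α ^ 3 = zetaR 3 * (E / (3 * zetaR 4)) ^ ((3 : ℝ) / 4) := by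
    rw [hα_pow, div_eq_mul_inv, ← inv_rpow hb.le, inv_div]
    norm_num
  refine ⟨?_, hmass, ?_, fun _ => ?_⟩
  · rw [integral_harmonic_trap_energy hα_pos, hα_pow]
    norm_num
    field_simp
  · rw [hmass, mul_rpow_div_lt_iff (by norm_num) (by positivity) hz3 hM.le hE.le]
    norm_num
  · rw [hmass]
    field_simp
end
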